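/- In the two-worker direct mechanism, the truthful strategy profile (each worker reports their true type) is an ex post equilibrium, and the profile in which each worker reports E regardless of type is also an ex post equilibrium; the two profiles induce the same outcome only at the type profile (E,E), and at every type profile in which at least one worker is of type B the two profiles induce different contract pairs. -/
import Mathlib


/-- Worker types: beginner or expert. -/
inductive WorkerType | B | E
deriving DecidableEq

/-- Contracts: salary High/Low paired with task Mixed/Delicate/Perfunctory. -/
inductive Contract | HM | HD | LM | LP
deriving DecidableEq

/-- A worker's payoff from a contract, given the worker's own type. -/
def payoff : Contract → WorkerType → ℝ
  | .HM, .E => 4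
  | .HD, .E => 2
  | .LM, .E => 1
  | .LP, .E => 0
  | .HM, .B => 4
  | .HD, .B => 2
  | .LM, .B => 2
  | .LP, .B => 4

/-- The direct mechanism: a pair of reports ↦ (worker 1's contract, worker 2's contract). -/
def directPair : WorkerType → WorkerType → Contract × Contract
  | .B, .B => (.LM, .LM)
  | .B, .E => (.LP, .HD)
  | .E, .B => (.HD, .LP)
  | .E, .E => (.HM, .HM)

/-- Contract assigned by the direct mechanism to worker `i` under report profile `r`. -/
def directM (r : Fin 2 → WorkerType) (i : Fin 2) : Contract :=
  if i = 0 then (directPair (r 0) (r 1)).1 else (directPair (r 0) (r 1)).2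

/-- In the direct mechanism, the truthful profile and the all-E profile are both ex
post equilibria; they induce the same outcome only at the type profile (E, E), and
they induce different contract pairs at every profile with at least one beginner. -/
theorem two_equilibria_direct :
    -- the truthful profile is an ex post equilibrium
    (∀ (θ : Fin 2 → WorkerType) (i : Fin 2) (r : WorkerType),
      payoff (directM θ i) (θ i) ≥
        payoff (directM (Function.update θ i r) i) (θ i)) ∧
    -- the all-E profile is an ex post equilibrium
    (∀ (θ : Fin 2 → WorkerType) (i : Fin 2) (r : WorkerType),
      payoff (directM (fun _ => WorkerType.E) i) (θ i) ≥
        payoff (directM (Function.update (fun _ => WorkerType.E) i r) i) (θ i)) ∧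
    -- the two profiles induce the same outcome only at (E, E)
    (∀ θ : Fin 2 → WorkerType,
      directPair (θ 0) (θ 1) = directPair WorkerType.E WorkerType.E →
        θ 0 = WorkerType.E ∧ θ 1 = WorkerType.E) ∧
    -- at every profile with at least one beginner, the outcomes differ
    (∀ θ : Fin 2 → WorkerType, (∃ i, θ i = WorkerType.B) →
      directPair (θ 0) (θ 1) ≠ directPair WorkerType.E WorkerType.E) := by
  have hfun : ∀ θ : Fin 2 → WorkerType, θ = ![θ 0, θ 1] := by
    intro θ; funext j; fin_cases j <;> rfl
  refine ⟨?_, ?_, ?_, ?_⟩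
  · intro θ i r
    rw [hfun θ]
    cases h0 : θ 0 <;> cases h1 : θ 1 <;> fin_cases i <;> cases r <;>
      simp [directM, directPair, payoff, Function.update, Matrix.cons_val_zero,
        Matrix.cons_val_one, Fin.isValue] <;> norm_num
  · intro θ i r
    cases h : θ i <;> fin_cases i <;> cases r <;>
      simp only [directM, directPair, payoff, Function.update, Fin.isValue] <;>
      norm_num [directPair, payoff]
  · intro θ h
    cases h0 : θ 0 <;> cases h1 : θ 1 <;> rw [h0, h1] at h <;>
      simp [directPair] at h ⊢
  · intro θ ⟨i, hi⟩ h
    clear hfun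
    fin_cases i <;> cases h0 : θ 0 <;> cases h1 : θ 1 <;>
      simp_all [directPair]
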